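/- For E > 0 and c ∈ ℝ, the function φ_{E,c}(y) = (2√(2E)/(c²+4E)^{1/4}) · 1/√(cosh(2√E y) − c/√(c²+4E)) is a positive even solution of the ODE −φ'' + E φ + (c/2) φ³ − (3/16) φ⁵ = 0 on ℝ. -/

import Mathlib

/-!
With `u(y) = cosh (2 k y) - b` and `b < 1`, the profile `φ = A / √u` satisfies `φ² u = A²` and
`φ' = -(k / A²) sinh (2 k y) φ³`. Differentiating once more and eliminating `cosh = A² / φ² + b` and
`sinh² = cosh² - 1` gives the polynomial ODE
`φ'' = k² φ + (4 b k² / A²) φ³ + (3 (b² - 1) k² / A⁴) φ⁵`.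
For `k = √E`, `b = c / √(c² + 4E)` and `A² = 8E / √(c² + 4E)` its coefficients are `E`, `c / 2`, `-3 / 16`.
-/

open Real

noncomputable section

/-- Written as `A * (1 / √u)` so that the profile in the theorem is this function definitionally. -/
def brightProfile (A k b y : ℝ) : ℝ :=
  A * (1 / √(cosh (2 * k * y) - b))

lemma cosh_sub_pos_of_lt_one {b : ℝ} (hb : b < 1) (x : ℝ) : 0 < cosh x - b := by
  linarith [one_le_cosh x]

namespace brightProfile

variable {A k b : ℝ}

lemma pos (hA : 0 < A) (hb : b < 1) (y : ℝ) : 0 < brightProfile A k b y := by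
  have := cosh_sub_pos_of_lt_one hb (2 * k * y)
  unfold brightProfile
  positivity

lemma neg (y : ℝ) : brightProfile A k b (-y) = brightProfile A k b y := by
  simp only [brightProfile, mul_neg, cosh_neg]

lemma sq_mul_cosh_sub (hb : b < 1) (y : ℝ) :
    brightProfile A k b y ^ 2 * (cosh (2 * k * y) - b) = A ^ 2 := by
  have hu := cosh_sub_pos_of_lt_one hb (2 * k * y)
  rw [brightProfile, mul_pow, div_pow, sq_sqrt hu.le]
  field_simp

lemma hasDerivAt (hA : A ≠ 0) (hb : b < 1) (y : ℝ) :
    HasDerivAt (brightProfile A k b)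
      (-(k / A ^ 2) * sinh (2 * k * y) * brightProfile A k b y ^ 3) y := by
  have hu := cosh_sub_pos_of_lt_one hb (2 * k * y)
  have hsqrt := ((hasDerivAt_const_mul (2 * k)).cosh.sub_const b).sqrt hu.ne'
  have hprofile := (hsqrt.inv (sqrt_pos.mpr hu).ne').const_mul A
  simp only [← one_div] at hprofile
  refine hprofile.congr_deriv ?_
  rw [brightProfile]
  set S := √(cosh (2 * k * y) - b)
  have hS0 : S ≠ 0 := (sqrt_pos.mpr hu).ne'
  field_simp

lemma deriv_eq (hA : A ≠ 0) (hb : b < 1) :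
    deriv (brightProfile A k b) =
      fun y => -(k / A ^ 2) * sinh (2 * k * y) * brightProfile A k b y ^ 3 :=
  funext fun y => (hasDerivAt hA hb y).deriv

lemma deriv_deriv (hA : A ≠ 0) (hb : b < 1) (y : ℝ) :
    deriv (deriv (brightProfile A k b)) y =
      k ^ 2 * brightProfile A k b y + 4 * b * k ^ 2 / A ^ 2 * brightProfile A k b y ^ 3 +
        3 * (b ^ 2 - 1) * k ^ 2 / A ^ 4 * brightProfile A k b y ^ 5 := by
  have hφ' : HasDerivAt (fun y => -(k / A ^ 2) * sinh (2 * k * y) * brightProfile A k b y ^ 3)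
      _ y :=
    ((hasDerivAt_const_mul (2 * k)).sinh.const_mul (-(k / A ^ 2))).mul
      ((hasDerivAt hA hb y).pow 3)
  rw [deriv_eq hA hb, hφ'.deriv]
  have hrel := sq_mul_cosh_sub (A := A) (k := k) hb y
  have hsinh_sq := sinh_sq (2 * k * y)
  set φ := brightProfile A k b y
  set ch := cosh (2 * k * y)
  set sh := sinh (2 * k * y)
  field_simp
  linear_combination (3 * k ^ 2 * φ ^ 5) * hsinh_sq
    + (k ^ 2 * (3 * φ ^ 3 * (ch - b) + 6 * b * φ ^ 3 + A ^ 2 * φ)) * hrel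

end brightProfile

lemma rpow_quarter_sq {x : ℝ} (hx : 0 ≤ x) : (x ^ ((1 : ℝ) / 4)) ^ 2 = √x := by
  rw [← rpow_natCast, ← rpow_mul hx, sqrt_eq_rpow]
  norm_num

theorem bright_soliton_profile_solves_ODE (E c : ℝ) (hE : 0 < E) :
    ∀ φ : ℝ → ℝ,
      (φ = fun y =>
        (2 * Real.sqrt (2 * E) / (c ^ 2 + 4 * E) ^ ((1 : ℝ) / 4)) *
          (1 / Real.sqrt (Real.cosh (2 * Real.sqrt E * y) - c / Real.sqrt (c ^ 2 + 4 * E)))) →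
      (∀ y, 0 < φ y) ∧ (∀ y, φ (-y) = φ y) ∧
        (∀ y, -deriv (deriv φ) y + E * φ y + c / 2 * φ y ^ 3 - 3 / 16 * φ y ^ 5 = 0) := by
  set D := √(c ^ 2 + 4 * E)
  set A := 2 * √(2 * E) / (c ^ 2 + 4 * E) ^ ((1 : ℝ) / 4)
  have hΔ : 0 < c ^ 2 + 4 * E := by positivity
  have hD : 0 < D := sqrt_pos.mpr hΔ
  have hD_sq : D ^ 2 = c ^ 2 + 4 * E := sq_sqrt hΔ.le
  have hA : 0 < A := by positivity
  have hA_sq : A ^ 2 = 8 * E / D := by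
    rw [div_pow, rpow_quarter_sq hΔ.le, mul_pow, sq_sqrt (by positivity)]
    ring
  have hb : c / D < 1 := by
    rw [div_lt_one hD]
    exact (le_abs_self c).trans_lt (abs_lt_of_sq_lt_sq (by linarith) hD.le)
  rintro φ hφ
  replace hφ : φ = brightProfile A √E (c / D) := hφ
  subst hφ
  clear_value A D
  refine ⟨brightProfile.pos hA hb, brightProfile.neg, fun y => ?_⟩
  have hcubic : 4 * (c / D) * E / A ^ 2 = c / 2 := by
    rw [hA_sq]
    field_simp
    ring
  have hquintic : 3 * ((c / D) ^ 2 - 1) * E / A ^ 4 = -3 / 16 := by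
    rw [show A ^ 4 = (A ^ 2) ^ 2 by ring, hA_sq]
    field_simp
    linear_combination -16 * hD_sq
  rw [brightProfile.deriv_deriv hA.ne' hb, sq_sqrt hE.le]
  linear_combination -(brightProfile A √E (c / D) y ^ 3) * hcubic
    - brightProfile A √E (c / D) y ^ 5 * hquintic
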